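/- arXiv:1807.03483 — 2 statements merged into one kernel-verified Lean document; each statement's English description precedes it below -/
import Mathlib

section
/- Let N ≥ 1, let φ, ψ : ℝ^N → ℝ, let λ ∈ ℝ, and let v_j^{n−1}, v_j^n, v_j^{n+1}, v_{j−1}^n, v_{j+1}^n ∈ ℝ^N be entropy-variable values on a space-time stencil. Suppose the temporal fluxes u₊, u₋ ∈ ℝ^N satisfy ⟨v_j^{n+1} − v_j^n, u₊⟩ = φ(v_j^{n+1}) − φ(v_j^n) and ⟨v_j^n − v_j^{n−1}, u₋⟩ = φ(v_j^n) − φ(v_j^{n−1}), and the spatial fluxes f₊, f₋ ∈ ℝ^N satisfy ⟨v_{j+1}^n − v_j^n, f₊⟩ = ψ(v_{j+1}^n) − ψ(v_j^n) and ⟨v_j^n − v_{j−1}^n, f₋⟩ = ψ(v_j^n) − ψ(v_{j−1}^n). If the space-time finite-volume update (u₊ − u₋) + λ(f₊ − f₋) = 0 holds, then, defining the numerical entropy fluxes Û₊ = ½⟨v_j^n + v_j^{n+1}, u₊⟩ − ½(φ(v_j^n) + φ(v_j^{n+1})), Û₋ = ½⟨v_j^{n−1} + v_j^n, u₋⟩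 − ½(φ(v_j^{n−1}) + φ(v_j^n)), F̂₊ = ½⟨v_j^n + v_{j+1}^n, f₊⟩ − ½(ψ(v_j^n) + ψ(v_{j+1}^n)), and F̂₋ = ½⟨v_{j−1}^n + v_j^n, f₋⟩ − ½(ψ(v_{j−1}^n) + ψ(v_j^n)), one has the discrete entropy conservation identity (Û₊ − Û₋) + λ(F̂₊ − F̂₋) = 0. -/
/-!
Each entropy flux `½⟨v_L + v_R, u*⟩ − ½(φ v_L + φ v_R)` of an entropy conservative flux equals
`⟨v_L, u*⟩ − φ v_L` and also `⟨v_R, u*⟩ − φ v_R`. Evaluating all four fluxes of the cell at the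
central state `v_j^n`, the potentials cancel and the entropy residual becomes `⟨v_j^n, ·⟩` applied
to the residual of the finite-volume update, which vanishes.
-/

open RealInnerProductSpace

section EntropyFlux

variable {E : Type*} [NormedAddCommGroup E] [InnerProductSpace ℝ E]

def IsEntropyConservative (φ : E → ℝ) (vL vR u : E) : Prop :=
  ⟪vR - vL, u⟫ = φ vR - φ vL

noncomputable def entropyFlux (φ : E → ℝ) (vL vR u : E) : ℝ :=
  (1 / 2 : ℝ) * ⟪vL + vR, u⟫ - (1 / 2 : ℝ) * (φ vL + φ vR)

variable {φ : E → ℝ} {vL vR u : E}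

theorem IsEntropyConservative.entropyFlux_eq_left (h : IsEntropyConservative φ vL vR u) :
    entropyFlux φ vL vR u = ⟪vL, u⟫ - φ vL := by
  unfold IsEntropyConservative at h
  rw [inner_sub_left] at h
  rw [entropyFlux, inner_add_left]
  linear_combination (1 / 2 : ℝ) * h

theorem IsEntropyConservative.entropyFlux_eq_right (h : IsEntropyConservative φ vL vR u) :
    entropyFlux φ vL vR u = ⟪vR, u⟫ - φ vR := by
  unfold IsEntropyConservative at h
  rw [inner_sub_left] at h
  rw [entropyFlux, inner_add_left]
  linear_combination (-1 / 2 : ℝ) * h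

end EntropyFlux

theorem space_time_entropy_conservation_general (N : ℕ)
    (φ ψ : EuclideanSpace ℝ (Fin N) → ℝ) (lam : ℝ)
    (vjnm vjn vjnp vjm vjp : EuclideanSpace ℝ (Fin N))
    (up um fp fm : EuclideanSpace ℝ (Fin N))
    (hup : ⟪vjnp - vjn, up⟫ = φ vjnp - φ vjn)
    (hum : ⟪vjn - vjnm, um⟫ = φ vjn - φ vjnm)
    (hfp : ⟪vjp - vjn, fp⟫ = ψ vjp - ψ vjn)
    (hfm : ⟪vjn - vjm, fm⟫ = ψ vjn - ψ vjm)
    (hscheme : (up - um) + lam • (fp - fm) = 0) :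
    (((1 / 2 : ℝ) * ⟪vjn + vjnp, up⟫ - (1 / 2 : ℝ) * (φ vjn + φ vjnp)) -
     ((1 / 2 : ℝ) * ⟪vjnm + vjn, um⟫ - (1 / 2 : ℝ) * (φ vjnm + φ vjn))) +
    lam * (((1 / 2 : ℝ) * ⟪vjn + vjp, fp⟫ - (1 / 2 : ℝ) * (ψ vjn + ψ vjp)) -
           ((1 / 2 : ℝ) * ⟪vjm + vjn, fm⟫ - (1 / 2 : ℝ) * (ψ vjm + ψ vjn))) = 0 := by
  change (entropyFlux φ vjn vjnp up - entropyFlux φ vjnm vjn um) +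
    lam * (entropyFlux ψ vjn vjp fp - entropyFlux ψ vjm vjn fm) = 0
  rw [IsEntropyConservative.entropyFlux_eq_left hup,
    IsEntropyConservative.entropyFlux_eq_right hum,
    IsEntropyConservative.entropyFlux_eq_left hfp,
    IsEntropyConservative.entropyFlux_eq_right hfm]
  calc _ = ⟪vjn, (up - um) + lam • (fp - fm)⟫ := by
        rw [inner_add_right, inner_sub_right, inner_smul_right, inner_sub_right]
        ring
    _ = 0 := by rw [hscheme, inner_zero_right]

/-- A space-time finite-volume scheme with entropy conservative temporal fluxes
(with respect to the temporal potential `φ`) and entropy conservative spatial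
fluxes (with respect to the spatial potential `ψ`) satisfies a discrete entropy
conservation identity. -/
theorem space_time_entropy_conservation (N : ℕ) (hN : 1 ≤ N)
    (φ ψ : EuclideanSpace ℝ (Fin N) → ℝ) (lam : ℝ)
    (vjnm vjn vjnp vjm vjp : EuclideanSpace ℝ (Fin N))
    (up um fp fm : EuclideanSpace ℝ (Fin N))
    (hup : ⟪vjnp - vjn, up⟫ = φ vjnp - φ vjn)
    (hum : ⟪vjn - vjnm, um⟫ = φ vjn - φ vjnm)
    (hfp : ⟪vjp - vjn, fp⟫ = ψ vjp - ψ vjn)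
    (hfm : ⟪vjn - vjm, fm⟫ = ψ vjn - ψ vjm)
    (hscheme : (up - um) + lam • (fp - fm) = 0) :
    (((1 / 2 : ℝ) * ⟪vjn + vjnp, up⟫ - (1 / 2 : ℝ) * (φ vjn + φ vjnp)) -
     ((1 / 2 : ℝ) * ⟪vjnm + vjn, um⟫ - (1 / 2 : ℝ) * (φ vjnm + φ vjn))) +
    lam * (((1 / 2 : ℝ) * ⟪vjn + vjp, fp⟫ - (1 / 2 : ℝ) * (ψ vjn + ψ vjp)) -
           ((1 / 2 : ℝ) * ⟪vjm + vjn, fm⟫ - (1 / 2 : ℝ) * (ψ vjm + ψ vjn))) = 0 :=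
  space_time_entropy_conservation_general N φ ψ lam vjnm vjn vjnp vjm vjp up um fp fm hup hum hfp
    hfm hscheme
end

section
/- Let γ > 1 and let (ρ_L, u_L, p_L) and (ρ_R, u_R, p_R) be two states with ρ_L, ρ_R, p_L, p_R > 0. Define for each state z₁ = √(ρ/p), z₂ = u√(ρ/p), z₃ = √(ρp) and the entropy variables v = ((γ − S)/(γ−1) − ρu²/(2p), ρu/p, −ρ/p) with S = log p − γ log ρ. Assume z₁_L ≠ z₁_R and z₃_L ≠ z₃_R, and define Roe's entropy conservative spatial flux f* = (f₁, f₂, f₃) by f₁ = z̄₂ z₃^{ln}, f₂ = (z̄₃ + f₁ z̄₂)/z̄₁, and f₃ = (1/(2z̄₁)) (−f₁ ((1+γ)/(1−γ)) / z₁^{ln} + f₂ z̄₂). Then ⟨v_R − v_L, f*⟩ = ρ_R u_R − ρ_L u_L, i.e., f* satisfies the entropy conservation condition [v]·f* = [ψ] with spatial flux potential ψ = ρu. -/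
/-!
In Roe's variables the entropy variables become
`v = (γ/(γ-1) + log z₃ + (1+γ)/(γ-1) log z₁ - z₂²/2, z₁ z₂, -z₁²)` and the potential becomes
`ψ = ρu = z₂ z₃`. Every jump then factors through means: `[ab] = ā[b] + b̄[a]` and
`[log a] = [a] / a^{ln}`. Substituting Roe's flux, the terms in `[z₁]` cancel between the second
and third components, those in `[log z₁]` between the first and third, and what is left is
`z̄₂[z₃] + z̄₃[z₂] = [z₂ z₃]`.
-/

open Matrix

open Real

noncomputable def logMean (a b : ℝ) : ℝ := (b - a) / (log b - log a)

lemma log_sub_log_ne_zero {a b : ℝ} (ha : 0 < a) (hb : 0 < b) (hab : a ≠ b) :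
    log b - log a ≠ 0 :=
  sub_ne_zero.mpr fun h => hab (log_injOn_pos ha hb h.symm)

lemma logMean_ne_zero {a b : ℝ} (ha : 0 < a) (hb : 0 < b) (hab : a ≠ b) : logMean a b ≠ 0 :=
  div_ne_zero (sub_ne_zero.mpr hab.symm) (log_sub_log_ne_zero ha hb hab)

lemma log_sub_log_eq_sub_div_logMean {a b : ℝ} (hab : a ≠ b) :
    log b - log a = (b - a) / logMean a b :=
  (div_div_cancel₀ (sub_ne_zero.mpr hab.symm)).symm

/-- Uses `log p - γ log ρ = (1 - γ) log z₃ - (1 + γ) log z₁`, `ρu²/p = z₂²`, `ρ/p = z₁²`. -/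
noncomputable def roeEntropyVars (γ z₁ z₂ z₃ : ℝ) : Fin 3 → ℝ :=
  ![γ / (γ - 1) + log z₃ + (1 + γ) / (γ - 1) * log z₁ - z₂ ^ 2 / 2, z₁ * z₂, -z₁ ^ 2]

noncomputable def roeFlux (γ z₁L z₂L z₃L z₁R z₂R z₃R : ℝ) : Fin 3 → ℝ :=
  let z₁bar := (z₁L + z₁R) / 2
  let z₂bar := (z₂L + z₂R) / 2
  let z₃bar := (z₃L + z₃R) / 2
  let f₁ := z₂bar * logMean z₃L z₃R
  let f₂ := (z₃bar + f₁ * z₂bar) / z₁bar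
  let f₃ := (1 / (2 * z₁bar)) * (-f₁ * ((1 + γ) / (1 - γ)) / logMean z₁L z₁R + f₂ * z₂bar)
  ![f₁, f₂, f₃]

lemma sqrt_div_mul_sqrt_mul {ρ p : ℝ} (hρ : 0 ≤ ρ) (hp : 0 < p) : √(ρ / p) * √(ρ * p) = ρ := by
  rw [← sqrt_mul (div_nonneg hρ hp.le), show ρ / p * (ρ * p) = ρ * ρ by field_simp,
    sqrt_mul_self hρ]

lemma entropyVars_eq_roeEntropyVars {γ ρ u p : ℝ} (hγ : γ ≠ 1) (hρ : 0 < ρ) (hp : 0 < p) :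
    ![(γ - (log p - γ * log ρ)) / (γ - 1) - ρ * u ^ 2 / (2 * p), ρ * u / p, -(ρ / p)] =
      roeEntropyVars γ √(ρ / p) (u * √(ρ / p)) √(ρ * p) := by
  have hsq : √(ρ / p) ^ 2 = ρ / p := sq_sqrt (by positivity)
  have hlog₁ : log √(ρ / p) = (log ρ - log p) / 2 := by
    rw [log_sqrt (by positivity), log_div hρ.ne' hp.ne']
  have hlog₃ : log √(ρ * p) = (log ρ + log p) / 2 := by
    rw [log_sqrt (by positivity), log_mul hρ.ne' hp.ne']
  have hγ₁ : γ - 1 ≠ 0 := sub_ne_zero.mpr hγ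
  rw [roeEntropyVars, vecCons_inj, vecCons_inj, vecCons_inj]
  refine ⟨?_, ?_, ?_, rfl⟩
  · rw [hlog₁, hlog₃, mul_pow, hsq]
    field_simp
    ring
  · linear_combination -u * hsq
  · rw [hsq]

theorem roeEntropyVars_sub_dotProduct_roeFlux {γ z₁L z₂L z₃L z₁R z₂R z₃R : ℝ} (hγ : γ ≠ 1)
    (hz₁L : 0 < z₁L) (hz₁R : 0 < z₁R) (hz₃L : 0 < z₃L) (hz₃R : 0 < z₃R)
    (hz₁ : z₁L ≠ z₁R) (hz₃ : z₃L ≠ z₃R) :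
    (roeEntropyVars γ z₁R z₂R z₃R - roeEntropyVars γ z₁L z₂L z₃L) ⬝ᵥ
        roeFlux γ z₁L z₂L z₃L z₁R z₂R z₃R = z₂R * z₃R - z₂L * z₃L := by
  have hlog₁ := log_sub_log_eq_sub_div_logMean hz₁
  have hlog₃ := log_sub_log_eq_sub_div_logMean hz₃
  have hL₁ := logMean_ne_zero hz₁L hz₁R hz₁
  have hL₃ := logMean_ne_zero hz₃L hz₃R hz₃
  have hγ₁ : γ - 1 ≠ 0 := sub_ne_zero.mpr hγ
  have hγ₂ : 1 - γ ≠ 0 := sub_ne_zero.mpr hγ.symm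
  have hz₁bar : z₁L + z₁R ≠ 0 := by positivity
  simp only [roeEntropyVars, roeFlux, dotProduct, Fin.sum_univ_three, Pi.sub_apply,
    cons_val_zero, cons_val_one, cons_val]
  rw [eq_add_of_sub_eq' hlog₁, eq_add_of_sub_eq' hlog₃]
  field_simp
  ring

/-- Roe's entropy conservative spatial flux `f* = (f₁, f₂, f₃)` for the 1D Euler
equations satisfies the entropy conservation condition `[v]·f* = [ψ]` with spatial
flux potential `ψ = ρu`. -/
theorem roe_spatial_flux_is_entropy_conservative (γ ρL uL pL ρR uR pR : ℝ)
    (hγ : 1 < γ) (hρL : 0 < ρL) (hpL : 0 < pL) (hρR : 0 < ρR) (hpR : 0 < pR) :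
    let SL : ℝ := Real.log pL - γ * Real.log ρL
    let SR : ℝ := Real.log pR - γ * Real.log ρR
    let vL : Fin 3 → ℝ :=
      ![(γ - SL) / (γ - 1) - ρL * uL ^ 2 / (2 * pL), ρL * uL / pL, -(ρL / pL)]
    let vR : Fin 3 → ℝ :=
      ![(γ - SR) / (γ - 1) - ρR * uR ^ 2 / (2 * pR), ρR * uR / pR, -(ρR / pR)]
    let z1L : ℝ := Real.sqrt (ρL / pL)
    let z2L : ℝ := uL * Real.sqrt (ρL / pL)
    let z3L : ℝ := Real.sqrt (ρL * pL)
    let z1R : ℝ := Real.sqrt (ρR / pR)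
    let z2R : ℝ := uR * Real.sqrt (ρR / pR)
    let z3R : ℝ := Real.sqrt (ρR * pR)
    let z1bar : ℝ := (z1L + z1R) / 2
    let z2bar : ℝ := (z2L + z2R) / 2
    let z3bar : ℝ := (z3L + z3R) / 2
    let z1ln : ℝ := (z1R - z1L) / (Real.log z1R - Real.log z1L)
    let z3ln : ℝ := (z3R - z3L) / (Real.log z3R - Real.log z3L)
    let f1 : ℝ := z2bar * z3ln
    let f2 : ℝ := (z3bar + f1 * z2bar) / z1bar
    let f3 : ℝ := (1 / (2 * z1bar)) *
      (-f1 * ((1 + γ) / (1 - γ)) / z1ln + f2 * z2bar)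
    z1L ≠ z1R → z3L ≠ z3R →
      (vR - vL) ⬝ᵥ ![f1, f2, f3] = ρR * uR - ρL * uL := by
  intro SL SR vL vR z1L z2L z3L z1R z2R z3R z1bar z2bar z3bar z1ln z3ln f1 f2 f3 hz₁ hz₃
  have hvL : vL = roeEntropyVars γ z1L z2L z3L := entropyVars_eq_roeEntropyVars hγ.ne' hρL hpL
  have hvR : vR = roeEntropyVars γ z1R z2R z3R := entropyVars_eq_roeEntropyVars hγ.ne' hρR hpR
  have hf : ![f1, f2, f3] = roeFlux γ z1L z2L z3L z1R z2R z3R := rfl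
  have hz1L : 0 < z1L := sqrt_pos.2 (div_pos hρL hpL)
  have hz1R : 0 < z1R := sqrt_pos.2 (div_pos hρR hpR)
  have hz3L : 0 < z3L := sqrt_pos.2 (mul_pos hρL hpL)
  have hz3R : 0 < z3R := sqrt_pos.2 (mul_pos hρR hpR)
  rw [hvL, hvR, hf, roeEntropyVars_sub_dotProduct_roeFlux hγ.ne' hz1L hz1R hz3L hz3R hz₁ hz₃,
    mul_assoc, mul_assoc, sqrt_div_mul_sqrt_mul hρR.le hpR, sqrt_div_mul_sqrt_mul hρL.le hpL,
    mul_comm uR, mul_comm uL]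
end
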